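/- arXiv:2601.19456 — 3 statements merged into one kernel-verified Lean document; each statement's English description precedes it below -/
import Mathlib

section
/- Let Γ ⊂ ℝⁿ be a compact d-set with 0 < d ≤ n and d-set constants c₁, c₂, let D > 0 satisfy diam(Γ) ≤ D, and let f : (0,∞) → [0,∞] be nonincreasing. Then there exists C > 0, depending only on c₂, d and D, such that for every x ∈ Γ, ∫_Γ f(|x − y|) dH^d(y) ≤ C ∫_0^D r^{d−1} f(r) dr. -/
/-!
Cut `Γ \ {x}` into the dyadic annuli `D/2^(j+1) < |x - y| ≤ D/2^j`. On the `j`-th one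
`f(|x - y|) ≤ f(D/2^(j+1))`, and its measure is at most `K (D/2^j)^d`: for radii `≤ 1` by the
upper `d`-set bound, for larger radii because `Γ` is covered by `(2D+1)^n` unit balls centred in
`Γ` (a maximal `1`-separated subset, counted by comparing volumes). Finally
`f(t) (2t)^d ≤ 2·4^d ∫_{t/2}^{t} r^(d-1) f(r) dr`, since `r^(d-1) = r^d/r ≥ (t/2)^d/t` there, and
these intervals are disjoint in `(0, D]`.
-/

open MeasureTheory

/-- `Γ` is a `d`-set (Ahlfors–David `d`-regular) with regularity constants `c₁ ≤ c₂`: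
`c₁ r^d ≤ H^d(Γ ∩ B(x,r)) ≤ c₂ r^d` for all `x ∈ Γ` and `0 < r ≤ 1`. -/
def IsDSet {n : ℕ} (Γ : Set (EuclideanSpace ℝ (Fin n))) (d c₁ c₂ : ℝ) : Prop :=
  ∀ x ∈ Γ, ∀ r : ℝ, 0 < r → r ≤ 1 →
    ENNReal.ofReal (c₁ * r ^ d) ≤ μH[d] (Γ ∩ Metric.closedBall x r) ∧
    μH[d] (Γ ∩ Metric.closedBall x r) ≤ ENNReal.ofReal (c₂ * r ^ d)

open Measure Metric Set Module Function
open scoped ENNReal NNReal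

section Packing

variable {E : Type*} [NormedAddCommGroup E] [NormedSpace ℝ E] [FiniteDimensional ℝ E]
  [MeasurableSpace E] [BorelSpace E]

theorem Metric.IsSeparated.encard_le_of_subset_closedBall {ε : ℝ≥0} (hε : 0 < ε) {C : Set E}
    (hC : IsSeparated ε C) {x : E} {D : ℝ} (hD : 0 ≤ D) (hCx : C ⊆ closedBall x D) :
    (C.encard : ℝ≥0∞) ≤ ENNReal.ofReal ((2 * D / ε + 1) ^ finrank ℝ E) := by
  set μ : Measure E := Measure.addHaar
  set v := ENNReal.ofReal ((ε / 2 : ℝ) ^ finrank ℝ E) * μ (closedBall 0 1)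
  have hε2 : (0 : ℝ) < ε / 2 := by positivity
  have hv : μ (closedBall 0 (ε / 2)) = v := addHaar_closedBall' μ 0 hε2.le
  have hv0 : v ≠ 0 := hv ▸ (measure_closedBall_pos μ 0 hε2).ne'
  have hvtop : v ≠ ⊤ := hv ▸ measure_closedBall_lt_top.ne
  have hdisj : Pairwise (Disjoint on fun p : C => closedBall (p : E) (ε / 2)) := by
    rintro ⟨p, hp⟩ ⟨q, hq⟩ hpq
    refine closedBall_disjoint_closedBall ?_
    have hεpq : (ε : ℝ≥0∞) < edist p q := hC hp hq (Subtype.coe_ne_coe.mpr hpq)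
    rw [edist_dist, ← ENNReal.ofReal_coe_nnreal, ENNReal.ofReal_lt_ofReal_iff'] at hεpq
    linarith [hεpq.1]
  have hsub : (⋃ p : C, closedBall (p : E) (ε / 2)) ⊆ closedBall x (D + ε / 2) :=
    iUnion_subset fun p => closedBall_subset_closedBall' (by linarith [mem_closedBall.mp (hCx p.2)])
  have hpack : C.encard * v ≤ ENNReal.ofReal ((2 * D / ε + 1) ^ finrank ℝ E) * v := calc
    C.encard * v = ∑' p : C, μ (closedBall (p : E) (ε / 2)) := by
      simp only [addHaar_closedBall' μ _ hε2.le, ENNReal.tsum_set_const, v]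
    _ ≤ μ (⋃ p : C, closedBall (p : E) (ε / 2)) :=
      tsum_meas_le_meas_iUnion_of_disjoint μ (fun _ => measurableSet_closedBall) hdisj
    _ ≤ μ (closedBall x (D + ε / 2)) := measure_mono hsub
    _ = ENNReal.ofReal ((2 * D / ε + 1) ^ finrank ℝ E) * v := by
      rw [addHaar_closedBall' μ x (by positivity), ← mul_assoc,
        ← ENNReal.ofReal_mul (by positivity), ← mul_pow]
      congr 3
      field_simp
  exact (ENNReal.mul_le_mul_iff_left hv0 hvtop).mp hpack

theorem Metric.exists_isCover_encard_le_of_subset_closedBall {ε : ℝ≥0} (hε : 0 < ε) {A : Set E}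
    {x : E} {D : ℝ} (hD : 0 ≤ D) (hAx : A ⊆ closedBall x D) :
    ∃ N ⊆ A, (N.encard : ℝ≥0∞) ≤ ENNReal.ofReal ((2 * D / ε + 1) ^ finrank ℝ E) ∧
      IsCover ε A N := by
  have hpack : packingNumber ε A ≠ ⊤ := by
    have hle : (packingNumber ε A : ℝ≥0∞) ≤ ENNReal.ofReal ((2 * D / ε + 1) ^ finrank ℝ E) := by
      simp only [packingNumber, ENat.toENNReal_iSup]
      exact iSup₂_le fun C hCA => iSup_le fun hC =>
        hC.encard_le_of_subset_closedBall hε hD (hCA.trans hAx)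
    rintro h
    simp [h] at hle
  exact ⟨maximalSeparatedSet ε A, maximalSeparatedSet_subset,
    isSeparated_maximalSeparatedSet.encard_le_of_subset_closedBall hε hD
      (maximalSeparatedSet_subset.trans hAx),
    isCover_maximalSeparatedSet hpack⟩

end Packing

section LayerCake

variable {X : Type*} [MetricSpace X] [MeasurableSpace X] {μ : Measure X} {f : ℝ → ℝ≥0∞}

theorem setLIntegral_comp_dist_le_tsum_dyadic {Γ : Set X} {x : X} {D : ℝ} (hD : 0 < D)
    (hx : μ {x} = 0) (hΓx : Γ ⊆ closedBall x D)
    (hf : ∀ r r' : ℝ, 0 < r → r ≤ r' → f r' ≤ f r) :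
    ∫⁻ y in Γ, f (dist x y) ∂μ ≤
      ∑' j : ℕ, f (D / 2 ^ (j + 1)) * μ (Γ ∩ closedBall x (D / 2 ^ j)) := by
  set S : ℕ → Set X := fun j => Γ ∩ closedBall x (D / 2 ^ j) ∩ {y | D / 2 ^ (j + 1) < dist x y}
  have hcover : Γ \ {x} ⊆ ⋃ j, S j := by
    rintro y ⟨hyΓ, hyx⟩
    have hpos : 0 < dist x y := dist_pos.mpr (Ne.symm hyx)
    have hyD : dist x y ≤ D := dist_comm x y ▸ hΓx hyΓ
    obtain ⟨j, hj, hj'⟩ := exists_nat_pow_near ((one_le_div hpos).mpr hyD) one_lt_two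
    refine mem_iUnion.mpr ⟨j, ⟨hyΓ, ?_⟩, ?_⟩
    · rw [mem_closedBall, dist_comm, le_div_iff₀ (by positivity), mul_comm]
      exact (le_div_iff₀ hpos).mp hj
    · rw [mem_ofPred_eq, div_lt_iff₀ (by positivity), mul_comm]
      exact (div_lt_iff₀ hpos).mp hj'
  have hannulus : ∀ j, ∫⁻ y in S j, f (dist x y) ∂μ ≤
      f (D / 2 ^ (j + 1)) * μ (Γ ∩ closedBall x (D / 2 ^ j)) := fun j => calc
    ∫⁻ y in S j, f (dist x y) ∂μ ≤ ∫⁻ _ in S j, f (D / 2 ^ (j + 1)) ∂μ :=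
      setLIntegral_mono_ae measurable_const.aemeasurable
        (ae_of_all _ fun y hy => hf _ _ (by positivity) hy.2.le)
    _ ≤ f (D / 2 ^ (j + 1)) * μ (Γ ∩ closedBall x (D / 2 ^ j)) := by
      rw [setLIntegral_const]
      gcongr
      exact inter_subset_left
  -- `f 0` is unconstrained, so the centre has to be discarded first
  calc ∫⁻ y in Γ, f (dist x y) ∂μ = ∫⁻ y in Γ \ {x}, f (dist x y) ∂μ :=
        (setLIntegral_congr (sdiff_null_ae_eq_self hx)).symm
    _ ≤ ∫⁻ y in ⋃ j, S j, f (dist x y) ∂μ := lintegral_mono_set hcover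
    _ ≤ ∑' j, ∫⁻ y in S j, f (dist x y) ∂μ := lintegral_iUnion_le _ _
    _ ≤ _ := ENNReal.tsum_le_tsum hannulus

theorem ofReal_rpow_mul_le_setLIntegral_Ioc_half {d t : ℝ} (hd : 0 ≤ d) (ht : 0 < t)
    (hf : ∀ r r' : ℝ, 0 < r → r ≤ r' → f r' ≤ f r) :
    ENNReal.ofReal ((2 * t) ^ d) * f t ≤
      ENNReal.ofReal (2 * 4 ^ d) * ∫⁻ r in Ioc (t / 2) t, ENNReal.ofReal (r ^ (d - 1)) * f r := by
  have hlower : ∀ r ∈ Ioc (t / 2) t,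
      ENNReal.ofReal ((t / 2) ^ d / t) * f t ≤ ENNReal.ofReal (r ^ (d - 1)) * f r := by
    rintro r ⟨hr, hrt⟩
    have hr0 : 0 < r := (half_pos ht).trans hr
    refine mul_le_mul' (ENNReal.ofReal_le_ofReal ?_) (hf r t hr0 hrt)
    rw [Real.rpow_sub_one hr0.ne']
    exact div_le_div₀ (by positivity) (Real.rpow_le_rpow (by positivity) hr.le hd) hr0 hrt
  have hscale : (2 * t) ^ d = 2 * 4 ^ d * ((t / 2) ^ d / t) * (t - t / 2) := by
    rw [show 2 * t = 4 * (t / 2) by ring, Real.mul_rpow (by norm_num) (by positivity)]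
    field_simp
    ring
  calc ENNReal.ofReal ((2 * t) ^ d) * f t
      = ENNReal.ofReal (2 * 4 ^ d) *
          (ENNReal.ofReal ((t / 2) ^ d / t) * f t * volume (Ioc (t / 2) t)) := by
        rw [Real.volume_Ioc, hscale, ENNReal.ofReal_mul (by positivity),
          ENNReal.ofReal_mul (by positivity)]
        ring
    _ = ENNReal.ofReal (2 * 4 ^ d) *
          ∫⁻ _ in Ioc (t / 2) t, ENNReal.ofReal ((t / 2) ^ d / t) * f t := by
        rw [setLIntegral_const]
    _ ≤ _ := by
        gcongr ENNReal.ofReal _ * ?_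
        exact setLIntegral_mono' measurableSet_Ioc hlower

theorem tsum_dyadic_le_setLIntegral_Ioc {d D : ℝ} (hd : 0 ≤ d) (hD : 0 < D)
    (hf : ∀ r r' : ℝ, 0 < r → r ≤ r' → f r' ≤ f r) :
    ∑' j : ℕ, ENNReal.ofReal ((D / 2 ^ j) ^ d) * f (D / 2 ^ (j + 1)) ≤
      ENNReal.ofReal (2 * 4 ^ d) * ∫⁻ r in Ioc 0 D, ENNReal.ofReal (r ^ (d - 1)) * f r := by
  set t : ℕ → ℝ := fun j => D / 2 ^ (j + 1)
  have ht : Antitone t := fun i j hij =>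
    div_le_div_of_nonneg_left hD.le (by positivity) (pow_le_pow_right₀ one_le_two (by omega))
  have hdouble : ∀ j, D / 2 ^ j = 2 * t j := fun j => by simp only [t]; field_simp; ring
  have hhalf : ∀ j, t (j + 1) = t j / 2 := fun j => by simp only [t]; field_simp; ring
  have hdisj : Pairwise (Disjoint on fun j => Ioc (t (j + 1)) (t j)) := by
    simpa only [Order.succ_eq_add_one] using ht.pairwise_disjoint_on_Ioc_succ
  calc ∑' j : ℕ, ENNReal.ofReal ((D / 2 ^ j) ^ d) * f (D / 2 ^ (j + 1))
      ≤ ∑' j, ENNReal.ofReal (2 * 4 ^ d) *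
          ∫⁻ r in Ioc (t (j + 1)) (t j), ENNReal.ofReal (r ^ (d - 1)) * f r :=
        ENNReal.tsum_le_tsum fun j => by
          rw [hdouble, hhalf]
          exact ofReal_rpow_mul_le_setLIntegral_Ioc_half hd (by positivity) hf
    _ = ENNReal.ofReal (2 * 4 ^ d) *
          ∫⁻ r in ⋃ j, Ioc (t (j + 1)) (t j), ENNReal.ofReal (r ^ (d - 1)) * f r := by
        rw [ENNReal.tsum_mul_left, lintegral_iUnion (fun _ => measurableSet_Ioc) hdisj]
    _ ≤ _ := by
        gcongr
        refine iUnion_subset fun j => Ioc_subset_Ioc (by positivity) ?_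
        exact (ht (Nat.zero_le j)).trans (div_le_self hD.le (one_le_pow₀ one_le_two))

theorem setLIntegral_comp_dist_le {Γ : Set X} {x : X} {d D : ℝ} {K : ℝ≥0∞} (hd : 0 ≤ d)
    (hD : 0 < D) (hx : μ {x} = 0) (hΓx : Γ ⊆ closedBall x D)
    (hball : ∀ r, 0 < r → r ≤ D → μ (Γ ∩ closedBall x r) ≤ K * ENNReal.ofReal (r ^ d))
    (hf : ∀ r r' : ℝ, 0 < r → r ≤ r' → f r' ≤ f r) :
    ∫⁻ y in Γ, f (dist x y) ∂μ ≤
      ENNReal.ofReal (2 * 4 ^ d) * K * ∫⁻ r in Ioc 0 D, ENNReal.ofReal (r ^ (d - 1)) * f r :=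
  calc ∫⁻ y in Γ, f (dist x y) ∂μ
      ≤ ∑' j : ℕ, f (D / 2 ^ (j + 1)) * μ (Γ ∩ closedBall x (D / 2 ^ j)) :=
        setLIntegral_comp_dist_le_tsum_dyadic hD hx hΓx hf
    _ ≤ ∑' j : ℕ, f (D / 2 ^ (j + 1)) * (K * ENNReal.ofReal ((D / 2 ^ j) ^ d)) :=
        ENNReal.tsum_le_tsum fun j => by
          gcongr
          exact hball _ (by positivity) (div_le_self hD.le (one_le_pow₀ one_le_two))
    _ = K * ∑' j : ℕ, ENNReal.ofReal ((D / 2 ^ j) ^ d) * f (D / 2 ^ (j + 1)) := by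
        rw [← ENNReal.tsum_mul_left]
        congr 1 with j
        ring
    _ ≤ K * (ENNReal.ofReal (2 * 4 ^ d) *
          ∫⁻ r in Ioc 0 D, ENNReal.ofReal (r ^ (d - 1)) * f r) := by
        gcongr
        exact tsum_dyadic_le_setLIntegral_Ioc hd hD hf
    _ = _ := by ring

end LayerCake

section DSet

variable {n : ℕ} {Γ : Set (EuclideanSpace ℝ (Fin n))} {d c₁ c₂ D : ℝ}

theorem IsDSet.hausdorffMeasure_le (hΓ : IsDSet Γ d c₁ c₂) {x : EuclideanSpace ℝ (Fin n)}
    (hD : 0 ≤ D) (hΓx : Γ ⊆ closedBall x D) :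
    μH[d] Γ ≤ ENNReal.ofReal ((2 * D + 1) ^ n * c₂) := by
  obtain ⟨N, hNΓ, hNcard, hNcover⟩ :=
    exists_isCover_encard_le_of_subset_closedBall (ε := 1) one_pos hD hΓx
  simp only [NNReal.coe_one, div_one, finrank_euclideanSpace_fin] at hNcard
  have hNfin : N.Finite := encard_ne_top_iff.mp fun h => by simp [h] at hNcard
  have hΓN : Γ ⊆ ⋃ p ∈ N, Γ ∩ closedBall p 1 := by
    rw [← inter_iUnion₂]
    simpa [isCover_iff_subset_iUnion_closedBall] using hNcover
  calc μH[d] Γ ≤ μH[d] (⋃ p ∈ N, Γ ∩ closedBall p 1) := measure_mono hΓN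
    _ ≤ ∑' p : N, μH[d] (Γ ∩ closedBall (p : EuclideanSpace ℝ (Fin n)) 1) :=
      measure_biUnion_le _ hNfin.countable _
    _ ≤ ∑' _ : N, ENNReal.ofReal c₂ := ENNReal.tsum_le_tsum fun p => by
      simpa using (hΓ p (hNΓ p.2) 1 one_pos le_rfl).2
    _ = N.encard * ENNReal.ofReal c₂ := ENNReal.tsum_set_const N _
    _ ≤ ENNReal.ofReal ((2 * D + 1) ^ n) * ENNReal.ofReal c₂ := by gcongr
    _ = ENNReal.ofReal ((2 * D + 1) ^ n * c₂) := (ENNReal.ofReal_mul (by positivity)).symm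

theorem IsDSet.hausdorffMeasure_inter_closedBall_le (hΓ : IsDSet Γ d c₁ c₂) (hd : 0 ≤ d)
    (hc₂ : 0 ≤ c₂) {x : EuclideanSpace ℝ (Fin n)} (hx : x ∈ Γ) (hD : 0 ≤ D)
    (hΓx : Γ ⊆ closedBall x D) {r : ℝ} (hr : 0 < r) :
    μH[d] (Γ ∩ closedBall x r) ≤
      ENNReal.ofReal ((2 * D + 1) ^ n * c₂) * ENNReal.ofReal (r ^ d) := by
  have hK : c₂ ≤ (2 * D + 1) ^ n * c₂ := le_mul_of_one_le_left hc₂ (one_le_pow₀ (by linarith))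
  rw [← ENNReal.ofReal_mul (by positivity)]
  rcases le_or_gt r 1 with hr1 | hr1
  · exact (hΓ x hx r hr hr1).2.trans (ENNReal.ofReal_le_ofReal (by gcongr))
  · calc μH[d] (Γ ∩ closedBall x r) ≤ μH[d] Γ := measure_mono inter_subset_left
      _ ≤ ENNReal.ofReal ((2 * D + 1) ^ n * c₂) := hΓ.hausdorffMeasure_le hD hΓx
      _ ≤ ENNReal.ofReal ((2 * D + 1) ^ n * c₂ * r ^ d) :=
        ENNReal.ofReal_le_ofReal
          (le_mul_of_one_le_right (by positivity) (Real.one_le_rpow hr1.le hd))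

end DSet

theorem stmt10_general (n : ℕ) (d c₂ D : ℝ) (hd : 0 < d) (hc₂ : 0 < c₂)
    (hD : 0 < D) :
    ∃ C : ℝ, 0 < C ∧
      ∀ (Γ : Set (EuclideanSpace ℝ (Fin n))) (c₁ : ℝ), 0 < c₁ → c₁ ≤ c₂ →
        IsCompact Γ → IsDSet Γ d c₁ c₂ → Metric.diam Γ ≤ D →
        ∀ f : ℝ → ENNReal, (∀ r r' : ℝ, 0 < r → r ≤ r' → f r' ≤ f r) →
        ∀ x ∈ Γ,
          (∫⁻ y in Γ, f ‖x - y‖ ∂μH[d]) ≤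
            ENNReal.ofReal C *
              ∫⁻ r in Set.Ioc (0 : ℝ) D, ENNReal.ofReal (r ^ (d - 1)) * f r := by
  refine ⟨2 * 4 ^ d * ((2 * D + 1) ^ n * c₂), by positivity, ?_⟩
  intro Γ c₁ _ _ hΓ hds hdiam f hf x hx
  have hΓx : Γ ⊆ closedBall x D := fun y hy =>
    (dist_le_diam_of_mem hΓ.isBounded hy hx).trans hdiam
  have : NullSingletonClass (μH[d] : Measure (EuclideanSpace ℝ (Fin n))) :=
    nullSingletonClass_hausdorff _ hd
  rw [ENNReal.ofReal_mul (by positivity)]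
  simpa only [dist_eq_norm] using setLIntegral_comp_dist_le hd.le hD (measure_singleton x) hΓx
    (fun r hr _ => hds.hausdorffMeasure_inter_closedBall_le hd.le hc₂.le hx hD.le hΓx hr) hf

/-- Layer-cake estimate over `d`-sets: there is `C > 0`, depending only on `c₂`, `d`
and `D` (and the ambient dimension), such that for every compact `d`-set `Γ ⊂ ℝⁿ`
with `diam Γ ≤ D`, every nonincreasing `f : (0,∞) → [0,∞]`, and every `x ∈ Γ`,
`∫_Γ f(|x−y|) dH^d(y) ≤ C ∫₀^D r^{d−1} f(r) dr`. -/
theorem stmt10 (n : ℕ) (d c₂ D : ℝ) (hd : 0 < d) (hdn : d ≤ n) (hc₂ : 0 < c₂)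
    (hD : 0 < D) :
    ∃ C : ℝ, 0 < C ∧
      ∀ (Γ : Set (EuclideanSpace ℝ (Fin n))) (c₁ : ℝ), 0 < c₁ → c₁ ≤ c₂ →
        IsCompact Γ → IsDSet Γ d c₁ c₂ → Metric.diam Γ ≤ D →
        ∀ f : ℝ → ENNReal, (∀ r r' : ℝ, 0 < r → r ≤ r' → f r' ≤ f r) →
        ∀ x ∈ Γ,
          (∫⁻ y in Γ, f ‖x - y‖ ∂μH[d]) ≤
            ENNReal.ofReal C *
              ∫⁻ r in Set.Ioc (0 : ℝ) D, ENNReal.ofReal (r ^ (d - 1)) * f r :=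
  stmt10_general n d c₂ D hd hc₂ hD
end

section
/- Let n ≥ 1 and k > 0, and let σ : ℝⁿ → ℝ be continuous and compactly supported with 0 ≤ σ ≤ 1 everywhere, σ(ξ) = 1 for |ξ| ≤ √2·k, σ(ξ) ≥ 1/2 for |ξ| ≤ 2k, and σ(ξ) ≤ 1/2 for |ξ| ≥ 2k. Define α_k⁰(ξ) := σ(ξ) + (1 − σ(ξ))·(|ξ|² − k²)^{-1} (the second term being zero wherever σ(ξ) = 1; note that σ(ξ) < 1 implies |ξ| > √2·k, so |ξ|² − k² > 0 there). Then there exist constants C ≥ α > 0 such that α·(1 + |ξ|²)^{-1} ≤ α_k⁰(ξ) ≤ C·(1 + |ξ|²)^{-1} for all ξ ∈ ℝⁿ. -/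
open MeasureTheory

set_option maxHeartbeats 1000000 in
/-- Two-sided bound on the symbol `α_k⁰(ξ) = σ(ξ) + (1 − σ(ξ))(|ξ|² − k²)⁻¹` of the
regularised free resolvent: there are `C ≥ α > 0` with
`α(1 + |ξ|²)⁻¹ ≤ α_k⁰(ξ) ≤ C(1 + |ξ|²)⁻¹` for all `ξ`. -/
theorem stmt11 (n : ℕ) (hn : 1 ≤ n) (k : ℝ) (hk : 0 < k)
    (σ : EuclideanSpace ℝ (Fin n) → ℝ)
    (hcont : Continuous σ) (hsupp : HasCompactSupport σ)
    (h0 : ∀ ξ, 0 ≤ σ ξ) (h1 : ∀ ξ, σ ξ ≤ 1)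
    (hone : ∀ ξ : EuclideanSpace ℝ (Fin n), ‖ξ‖ ≤ Real.sqrt 2 * k → σ ξ = 1)
    (hge : ∀ ξ : EuclideanSpace ℝ (Fin n), ‖ξ‖ ≤ 2 * k → 1/2 ≤ σ ξ)
    (hle : ∀ ξ : EuclideanSpace ℝ (Fin n), 2 * k ≤ ‖ξ‖ → σ ξ ≤ 1/2) :
    ∃ α C : ℝ, 0 < α ∧ α ≤ C ∧
      ∀ ξ : EuclideanSpace ℝ (Fin n),
        α * (1 + ‖ξ‖ ^ 2)⁻¹ ≤ σ ξ + (1 - σ ξ) * (‖ξ‖ ^ 2 - k ^ 2)⁻¹ ∧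
        σ ξ + (1 - σ ξ) * (‖ξ‖ ^ 2 - k ^ 2)⁻¹ ≤ C * (1 + ‖ξ‖ ^ 2)⁻¹ := by
  obtain ⟨R₀, hR₀⟩ := hsupp.isBounded.subset_closedBall 0
  set R : ℝ := max R₀ (2 * k) with hRdef
  have hRk : 2 * k ≤ R := le_max_right _ _
  have hR0 : 0 < R := lt_of_lt_of_le (by linarith) hRk
  have hk2 : (0:ℝ) < k ^ 2 := by positivity
  set C₁ : ℝ := (1 + (k ^ 2)⁻¹) * (1 + R ^ 2) with hC1
  set C₂ : ℝ := (3 * k ^ 2)⁻¹ + 4 / 3 with hC2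
  have hC1pos : 0 < C₁ := by rw [hC1]; positivity
  have hC2pos : 0 < C₂ := by rw [hC2]; positivity
  have hRR : R₀ ≤ R := le_max_left _ _
  clear_value R C₁ C₂
  refine ⟨1/2, C₁ + C₂, by norm_num, ?_, ?_⟩
  · have : (1:ℝ) ≤ C₁ := by
      rw [hC1]; nlinarith [inv_pos.2 hk2, sq_nonneg R]
    linarith
  · intro ξ
    have ht0 : (0:ℝ) ≤ ‖ξ‖ := norm_nonneg _
    have hg0 : (0:ℝ) < 1 + ‖ξ‖ ^ 2 := by positivity
    have hgle1 : (1 + ‖ξ‖ ^ 2)⁻¹ ≤ 1 := by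
      rw [inv_le_one_iff₀]; right; nlinarith
    have hg0' : (0:ℝ) < (1 + ‖ξ‖ ^ 2)⁻¹ := inv_pos.2 hg0
    -- dichotomy on σ ξ = 1
    have hsec : σ ξ = 1 ∨ (σ ξ < 1 ∧ k ^ 2 ≤ ‖ξ‖ ^ 2 - k ^ 2) := by
      rcases eq_or_lt_of_le (h1 ξ) with h | h
      · exact Or.inl h
      · refine Or.inr ⟨h, ?_⟩
        have hns : ¬ (‖ξ‖ ≤ Real.sqrt 2 * k) := fun hc => absurd (hone ξ hc) h.ne
        push_neg at hns
        have h2 : (Real.sqrt 2 * k) ^ 2 = 2 * k ^ 2 := by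
          rw [mul_pow, Real.sq_sqrt (by norm_num : (0:ℝ) ≤ 2)]
        nlinarith [sq_nonneg (‖ξ‖ - Real.sqrt 2 * k), Real.sqrt_nonneg 2,
          mul_pos (Real.sqrt_pos.2 (by norm_num : (0:ℝ) < 2)) hk]
    have hterm_nonneg : 0 ≤ (1 - σ ξ) * (‖ξ‖ ^ 2 - k ^ 2)⁻¹ := by
      rcases hsec with h | ⟨h, h'⟩
      · simp [h]
      · have hpos : (0:ℝ) < ‖ξ‖ ^ 2 - k ^ 2 := lt_of_lt_of_le hk2 h'
        exact mul_nonneg (by linarith) (inv_pos.2 hpos).le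
    have hterm_le : (1 - σ ξ) * (‖ξ‖ ^ 2 - k ^ 2)⁻¹ ≤ (k ^ 2)⁻¹ := by
      rcases hsec with h | ⟨h, h'⟩
      · simp [h]; positivity
      · have hpos : (0:ℝ) < ‖ξ‖ ^ 2 - k ^ 2 := lt_of_lt_of_le hk2 h'
        calc (1 - σ ξ) * (‖ξ‖ ^ 2 - k ^ 2)⁻¹ ≤ 1 * (‖ξ‖ ^ 2 - k ^ 2)⁻¹ := by
              apply mul_le_mul_of_nonneg_right (by linarith [h0 ξ]) (le_of_lt (inv_pos.2 hpos))
          _ = (‖ξ‖ ^ 2 - k ^ 2)⁻¹ := one_mul _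
          _ ≤ (k ^ 2)⁻¹ := inv_anti₀ hk2 h'
    constructor
    · -- lower bound
      by_cases ht : ‖ξ‖ ≤ 2 * k
      · have hs := hge ξ ht
        have : (1:ℝ)/2 * (1 + ‖ξ‖ ^ 2)⁻¹ ≤ 1/2 := by linarith [hgle1, hg0'.le]
        linarith [hterm_nonneg]
      · push_neg at ht
        have hs := hle ξ ht.le
        have h2 : 2 * k ^ 2 < ‖ξ‖ ^ 2 := by nlinarith
        have hpos : (0:ℝ) < ‖ξ‖ ^ 2 - k ^ 2 := by nlinarith
        have hinv : (1 + ‖ξ‖ ^ 2)⁻¹ ≤ (‖ξ‖ ^ 2 - k ^ 2)⁻¹ :=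
          inv_anti₀ hpos (by nlinarith)
        have : (1:ℝ)/2 * (‖ξ‖ ^ 2 - k ^ 2)⁻¹ ≤ (1 - σ ξ) * (‖ξ‖ ^ 2 - k ^ 2)⁻¹ :=
          mul_le_mul_of_nonneg_right (by linarith) (inv_pos.2 hpos).le
        have hh : (1:ℝ)/2 * (1 + ‖ξ‖ ^ 2)⁻¹ ≤ 1/2 * (‖ξ‖ ^ 2 - k ^ 2)⁻¹ := by linarith
        linarith [h0 ξ]
    · -- upper bound
      by_cases ht : ‖ξ‖ ≤ R
      · have hf : σ ξ + (1 - σ ξ) * (‖ξ‖ ^ 2 - k ^ 2)⁻¹ ≤ 1 + (k ^ 2)⁻¹ :=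
          add_le_add (h1 ξ) hterm_le
        have hstep : (1 + (k ^ 2)⁻¹) ≤ C₁ * (1 + ‖ξ‖ ^ 2)⁻¹ := by
          have hA : (1:ℝ) ≤ (1 + R ^ 2) * (1 + ‖ξ‖ ^ 2)⁻¹ := by
            rw [← div_eq_mul_inv, le_div_iff₀ hg0]; nlinarith
          rw [hC1, mul_assoc]
          exact le_mul_of_one_le_right (by positivity) hA
        have hC : C₁ * (1 + ‖ξ‖ ^ 2)⁻¹ ≤ (C₁ + C₂) * (1 + ‖ξ‖ ^ 2)⁻¹ :=
          mul_le_mul_of_nonneg_right (by linarith) hg0'.le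
        linarith
      · push_neg at ht
        have hσ0 : σ ξ = 0 := by
          apply image_eq_zero_of_notMem_tsupport
          intro hmem
          have := hR₀ hmem
          simp [Metric.mem_closedBall, dist_zero_right] at this
          have : ‖ξ‖ ≤ R := le_trans this hRR
          linarith
        have h4 : 4 * k ^ 2 ≤ ‖ξ‖ ^ 2 := by nlinarith
        have hpos : (0:ℝ) < ‖ξ‖ ^ 2 - k ^ 2 := by nlinarith
        rw [hσ0]
        have h1le : 1 + ‖ξ‖ ^ 2 ≤ C₂ * (‖ξ‖ ^ 2 - k ^ 2) := by
          have hu : ((3:ℝ) * k ^ 2)⁻¹ * (3 * k ^ 2) = 1 := inv_mul_cancel₀ (by positivity)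
          have hu0 : (0:ℝ) < (3 * k ^ 2)⁻¹ := by positivity
          rw [hC2]; nlinarith [mul_nonneg hu0.le (by nlinarith : (0:ℝ) ≤ ‖ξ‖ ^ 2 - 4 * k ^ 2)]
        have key : (‖ξ‖ ^ 2 - k ^ 2)⁻¹ ≤ C₂ * (1 + ‖ξ‖ ^ 2)⁻¹ := by
          rw [← one_div, show C₂ * (1 + ‖ξ‖ ^ 2)⁻¹ = C₂ / (1 + ‖ξ‖ ^ 2) from
            (div_eq_mul_inv _ _).symm, div_le_div_iff₀ hpos hg0]
          nlinarith
        have hC : C₂ * (1 + ‖ξ‖ ^ 2)⁻¹ ≤ (C₁ + C₂) * (1 + ‖ξ‖ ^ 2)⁻¹ :=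
          mul_le_mul_of_nonneg_right (by linarith) hg0'.le
        simp only [sub_zero, one_mul, zero_add]
        linarith
end

section
/- Let n ≥ 1, k₀ > 0, R > 0, and let ψ : ℝⁿ → ℝ be smooth with compact support contained in the ball B_R := {x : |x| < R}, and set C_ψ := max(sup|ψ|, sup‖∇ψ‖, sup|Δψ|). Then there exists C₁ > 0, depending only on k₀ and C_ψ, with the following property: for every k ≥ k₀, every λ ∈ ℂ with |λ|² ≤ 2k², and every smooth function u : ℝⁿ → ℂ such that φ := −(Δu + λ²u) has compact support and ψ = 1 on a neighbourhood of the support of φ, one has, for every Schwartz function v on ℝⁿ, |∫_{ℝⁿ} φ(x) conj(v(x)) dx| ≤ C₁ · (∫_{B_R} ‖∇u‖² dx + k² ∫_{B_R} |u|² dx)^{1/2} · (∫_{ℝⁿ} ‖∇v‖² dx + k² ∫_{ℝⁿ} |v|² dx)^{1/2}. -/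
open MeasureTheory

/-- The partial derivative `∂u/∂x_j` of a function on ℝⁿ. -/
noncomputable def pderiv' {n : ℕ} {F : Type} [NormedAddCommGroup F] [NormedSpace ℝ F]
    (j : Fin n) (u : EuclideanSpace ℝ (Fin n) → F) (x : EuclideanSpace ℝ (Fin n)) : F :=
  fderiv ℝ u x (EuclideanSpace.single j 1)

/-- The squared Euclidean norm `‖∇u(x)‖² = Σ_j ‖∂_j u(x)‖²` of the gradient. -/
noncomputable def gradNormSq {n : ℕ} {F : Type} [NormedAddCommGroup F] [NormedSpace ℝ F]
    (u : EuclideanSpace ℝ (Fin n) → F) (x : EuclideanSpace ℝ (Fin n)) : ℝ :=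
  ∑ j : Fin n, ‖pderiv' j u x‖ ^ 2

/-- The Laplacian `Δu = Σ_j ∂²u/∂x_j²` of a function on ℝⁿ. -/
noncomputable def lap {n : ℕ} {F : Type} [NormedAddCommGroup F] [NormedSpace ℝ F]
    (u : EuclideanSpace ℝ (Fin n) → F) (x : EuclideanSpace ℝ (Fin n)) : F :=
  ∑ j : Fin n, pderiv' j (fun y => pderiv' j u y) x

section Aux

lemma l2CS {α : Type*} [MeasurableSpace α] {μ : Measure α} {f g : α → ℝ}
    (hf : AEStronglyMeasurable f μ) (hg : AEStronglyMeasurable g μ)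
    (hf0 : ∀ x, 0 ≤ f x) (hg0 : ∀ x, 0 ≤ g x)
    (hf2 : Integrable (fun x => f x ^ 2) μ) (hg2 : Integrable (fun x => g x ^ 2) μ) :
    ∫ x, f x * g x ∂μ ≤ Real.sqrt (∫ x, f x ^ 2 ∂μ) * Real.sqrt (∫ x, g x ^ 2 ∂μ) := by
  have hpq : Real.HolderConjugate 2 2 := Real.HolderConjugate.two_two
  have h2 : ENNReal.ofReal (2:ℝ) = 2 := by norm_num
  have hfm : MemLp f (ENNReal.ofReal (2:ℝ)) μ := by
    rw [h2, memLp_two_iff_integrable_sq hf]; exact hf2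
  have hgm : MemLp g (ENNReal.ofReal (2:ℝ)) μ := by
    rw [h2, memLp_two_iff_integrable_sq hg]; exact hg2
  have h := integral_mul_le_Lp_mul_Lq_of_nonneg hpq
    (Filter.Eventually.of_forall hf0) (Filter.Eventually.of_forall hg0) hfm hgm
  calc ∫ x, f x * g x ∂μ
      ≤ (∫ a, f a ^ (2:ℝ) ∂μ) ^ (1/(2:ℝ)) * (∫ a, g a ^ (2:ℝ) ∂μ) ^ (1/(2:ℝ)) := h
    _ = Real.sqrt (∫ x, f x ^ 2 ∂μ) * Real.sqrt (∫ x, g x ^ 2 ∂μ) := by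
        rw [Real.sqrt_eq_rpow, Real.sqrt_eq_rpow]
        norm_num [Real.rpow_natCast]

lemma schwartz_sq_integrable {E F : Type*} [NormedAddCommGroup E] [NormedSpace ℝ E]
    [NormedAddCommGroup F] [NormedSpace ℝ F] [MeasureSpace E] [FiniteDimensional ℝ E]
    [BorelSpace E] [(volume : Measure E).HasTemperateGrowth]
    (f : SchwartzMap E F) : Integrable (fun x => ‖f x‖ ^ 2) := by
  have h1 : Integrable (fun x => (SchwartzMap.seminorm ℝ 0 0) f * ‖f x‖) :=
    (f.integrable (μ := volume)).norm.const_mul _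
  refine h1.mono' ((f.continuous.norm.pow 2).aestronglyMeasurable) ?_
  filter_upwards with x
  rw [Real.norm_of_nonneg (by positivity), sq]
  exact mul_le_mul_of_nonneg_right (f.norm_le_seminorm ℝ x) (norm_nonneg _)

lemma pderiv'_contDiff {n : ℕ} {F : Type} [NormedAddCommGroup F] [NormedSpace ℝ F]
    {u : EuclideanSpace ℝ (Fin n) → F} (hu : ContDiff ℝ ((⊤:ℕ∞) : WithTop ℕ∞) u) (j : Fin n) :
    ContDiff ℝ ((⊤:ℕ∞) : WithTop ℕ∞) (pderiv' j u) :=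
  (hu.fderiv_right (by simp)).clm_apply contDiff_const

lemma pderiv'_mul {n : ℕ} {f g : EuclideanSpace ℝ (Fin n) → ℂ}
    (hf : Differentiable ℝ f) (hg : Differentiable ℝ g) (j : Fin n)
    (x : EuclideanSpace ℝ (Fin n)) :
    pderiv' j (fun y => f y * g y) x = pderiv' j f x * g x + f x * pderiv' j g x := by
  unfold pderiv'
  rw [fderiv_fun_mul (hf x) (hg x)]
  simp only [ContinuousLinearMap.add_apply, ContinuousLinearMap.smul_apply, smul_eq_mul]
  ring

lemma pderiv'_conj {n : ℕ} {f : EuclideanSpace ℝ (Fin n) → ℂ}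
    (hf : Differentiable ℝ f) (j : Fin n) (x : EuclideanSpace ℝ (Fin n)) :
    pderiv' j (fun y => (starRingEnd ℂ) (f y)) x = (starRingEnd ℂ) (pderiv' j f x) := by
  unfold pderiv'
  have h : HasFDerivAt (fun y => (starRingEnd ℂ) (f y))
      ((Complex.conjCLE.toContinuousLinearMap).comp (fderiv ℝ f x)) x :=
    (Complex.conjCLE.toContinuousLinearMap.hasFDerivAt).comp x (hf x).hasFDerivAt
  rw [h.fderiv]
  rfl

lemma pderiv'_ofReal {n : ℕ} {f : EuclideanSpace ℝ (Fin n) → ℝ}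
    (hf : Differentiable ℝ f) (j : Fin n) (x : EuclideanSpace ℝ (Fin n)) :
    pderiv' j (fun y => ((f y : ℝ) : ℂ)) x = ((pderiv' j f x : ℝ) : ℂ) := by
  unfold pderiv'
  have h : HasFDerivAt (fun y => ((f y : ℝ) : ℂ))
      (Complex.ofRealCLM.comp (fderiv ℝ f x)) x :=
    (Complex.ofRealCLM.hasFDerivAt).comp x (hf x).hasFDerivAt
  rw [h.fderiv]
  rfl

lemma gradNormSq_nonneg {n : ℕ} {F : Type} [NormedAddCommGroup F] [NormedSpace ℝ F]
    (u : EuclideanSpace ℝ (Fin n) → F) (x : EuclideanSpace ℝ (Fin n)) :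
    0 ≤ gradNormSq u x :=
  Finset.sum_nonneg fun j _ => by positivity

lemma gradNormSq_continuous {n : ℕ} {F : Type} [NormedAddCommGroup F] [NormedSpace ℝ F]
    {u : EuclideanSpace ℝ (Fin n) → F} (hu : ContDiff ℝ ((⊤:ℕ∞) : WithTop ℕ∞) u) :
    Continuous (gradNormSq u) :=
  continuous_finset_sum _ fun j _ => ((pderiv'_contDiff hu j).continuous.norm.pow 2)

end Aux

set_option maxHeartbeats 2000000 in
/-- Step 1 of the proof of the main inverse bound: there is `C₁ > 0`, depending only
on `k₀` and `C_ψ = max(sup|ψ|, sup‖∇ψ‖, sup|Δψ|)`, such that whenever `k ≥ k₀`,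
`|λ|² ≤ 2k²`, `u` is smooth, `φ := −(Δu + λ²u)` is compactly supported, and `ψ = 1`
on a neighbourhood of `supp φ`, one has, for every Schwartz `v`,
`|∫ φ conj(v)| ≤ C₁ ‖u‖_{H¹_k(B_R)} ‖v‖_{H¹_k(ℝⁿ)}`. -/
theorem stmt12 (k₀ Cψ : ℝ) (hk₀ : 0 < k₀) :
    ∃ C₁ : ℝ, 0 < C₁ ∧
      ∀ (n : ℕ), 1 ≤ n → ∀ R : ℝ, 0 < R →
      ∀ ψ : EuclideanSpace ℝ (Fin n) → ℝ,
        ContDiff ℝ (⊤ : ℕ∞) ψ → HasCompactSupport ψ →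
        tsupport ψ ⊆ Metric.ball (0 : EuclideanSpace ℝ (Fin n)) R →
        Cψ = max (⨆ x, |ψ x|)
              (max (⨆ x, Real.sqrt (gradNormSq ψ x)) (⨆ x, |lap ψ x|)) →
      ∀ k : ℝ, k₀ ≤ k →
      ∀ lam : ℂ, ‖lam‖ ^ 2 ≤ 2 * k ^ 2 →
      ∀ u : EuclideanSpace ℝ (Fin n) → ℂ, ContDiff ℝ (⊤ : ℕ∞) u →
        HasCompactSupport (fun x => -(lap u x + lam ^ 2 * u x)) →
        (∃ V : Set (EuclideanSpace ℝ (Fin n)), IsOpen V ∧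
          tsupport (fun x => -(lap u x + lam ^ 2 * u x)) ⊆ V ∧ ∀ x ∈ V, ψ x = 1) →
      ∀ v : SchwartzMap (EuclideanSpace ℝ (Fin n)) ℂ,
        ‖∫ x, (-(lap u x + lam ^ 2 * u x)) * (starRingEnd ℂ) (v x)‖ ≤
          C₁ * ((∫ x in Metric.ball (0 : EuclideanSpace ℝ (Fin n)) R, gradNormSq u x)
                + k ^ 2 * ∫ x in Metric.ball (0 : EuclideanSpace ℝ (Fin n)) R,
                    ‖u x‖ ^ 2) ^ (1/2 : ℝ)
            * ((∫ x, gradNormSq (⇑v) x) + k ^ 2 * ∫ x, ‖v x‖ ^ 2) ^ (1/2 : ℝ) := by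
  refine ⟨(|Cψ| + 1) * (3 + 1/k₀), by positivity, ?_⟩
  intro n hn R hR ψ hψtop hψc hψR hCψeq k hk lam hlam u hutop hφc hVex v
  obtain ⟨V, hVo, hVsub, hVone⟩ := hVex
  have hkpos : 0 < k := lt_of_lt_of_le hk₀ hk
  -- smoothness downgrades
  have hψ : ContDiff ℝ ((⊤:ℕ∞) : WithTop ℕ∞) ψ := hψtop.of_le (by simp)
  have hu : ContDiff ℝ ((⊤:ℕ∞) : WithTop ℕ∞) u := hutop.of_le (by simp)
  have hv : ContDiff ℝ ((⊤:ℕ∞) : WithTop ℕ∞) ⇑v := v.smooth ⊤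
  have hvconj : ContDiff ℝ ((⊤:ℕ∞) : WithTop ℕ∞) (fun y => (starRingEnd ℂ) (v y)) :=
    Complex.conjCLE.toContinuousLinearMap.contDiff.comp hv
  have hψℂ : ContDiff ℝ ((⊤:ℕ∞) : WithTop ℕ∞) (fun y => ((ψ y : ℝ) : ℂ)) :=
    Complex.ofRealCLM.contDiff.comp hψ
  set w : EuclideanSpace ℝ (Fin n) → ℂ :=
    fun x => ((ψ x : ℝ) : ℂ) * (starRingEnd ℂ) (v x) with hw_def
  have hw : ContDiff ℝ ((⊤:ℕ∞) : WithTop ℕ∞) w := hψℂ.mul hvconj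
  have hone : ((⊤:ℕ∞) : WithTop ℕ∞) ≠ 0 := by simp
  have hwd : Differentiable ℝ w := hw.differentiable hone
  have hud : Differentiable ℝ u := hu.differentiable hone
  have hψd : Differentiable ℝ ψ := hψ.differentiable hone
  have hvd : Differentiable ℝ ⇑v := hv.differentiable hone
  -- support facts
  have hw0 : ∀ x ∉ tsupport ψ, w x = 0 := by
    intro x hx
    simp [hw_def, image_eq_zero_of_notMem_tsupport hx]
  have htw : tsupport w ⊆ tsupport ψ := by
    apply closure_mono
    intro x hx
    simp only [Function.mem_support] at hx ⊢
    intro h0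
    exact hx (by simp [hw_def, h0])
  have hwc : HasCompactSupport w := HasCompactSupport.intro hψc hw0
  have hwder0 : ∀ (j : Fin n), ∀ x ∉ tsupport ψ, pderiv' j w x = 0 := by
    intro j x hx
    have hx' : x ∉ tsupport (fderiv ℝ w) := fun hmem => hx (htw (tsupport_fderiv_subset ℝ hmem))
    have : fderiv ℝ w x = 0 := image_eq_zero_of_notMem_tsupport hx'
    simp [pderiv', this]
  have hwdc : ∀ j : Fin n, HasCompactSupport (pderiv' j w) :=
    fun j => HasCompactSupport.intro hψc (hwder0 j)
  -- continuity facts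
  have cu : ∀ j : Fin n, Continuous (pderiv' j u) := fun j => (pderiv'_contDiff hu j).continuous
  have cuu : ∀ j : Fin n, Continuous (pderiv' j (pderiv' j u)) :=
    fun j => (pderiv'_contDiff (pderiv'_contDiff hu j) j).continuous
  have cw : Continuous w := hw.continuous
  have cwj : ∀ j : Fin n, Continuous (pderiv' j w) := fun j => (pderiv'_contDiff hw j).continuous
  have clap : Continuous (lap u) := continuous_finset_sum _ fun j _ => cuu j
  -- integrability facts
  have int1 : ∀ j : Fin n, Integrable (fun x => pderiv' j (pderiv' j u) x * w x) :=
    fun j => ((cuu j).mul cw).integrable_of_hasCompactSupport (hwc.mul_left)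
  have int2 : ∀ j : Fin n, Integrable (fun x => pderiv' j u x * pderiv' j w x) :=
    fun j => ((cu j).mul (cwj j)).integrable_of_hasCompactSupport ((hwdc j).mul_left)
  have int3 : ∀ j : Fin n, Integrable (fun x => pderiv' j u x * w x) :=
    fun j => ((cu j).mul cw).integrable_of_hasCompactSupport (hwc.mul_left)
  have int4 : Integrable (fun x => u x * w x) :=
    (hu.continuous.mul cw).integrable_of_hasCompactSupport (hwc.mul_left)
  have int5 : Integrable (fun x => lap u x * w x) :=
    (clap.mul cw).integrable_of_hasCompactSupport (hwc.mul_left)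
  -- integration by parts
  have ibp : ∀ j : Fin n, ∫ x, pderiv' j (pderiv' j u) x * w x
      = - ∫ x, pderiv' j u x * pderiv' j w x := by
    intro j
    have h := integral_mul_fderiv_eq_neg_fderiv_mul_of_integrable
      (μ := (volume : Measure (EuclideanSpace ℝ (Fin n))))
      (f := pderiv' j u) (g := w) (v := EuclideanSpace.single j 1)
      (int1 j) (int2 j) (int3 j) (fun x _ => (pderiv'_contDiff hu j).differentiable hone x) (fun x _ => hwd x)
    rw [show (∫ x, pderiv' j u x * pderiv' j w x)
        = ∫ x, pderiv' j u x * fderiv ℝ w x (EuclideanSpace.single j 1) from rfl, h, neg_neg]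
    rfl
  -- pointwise replacement of conj v by w on the support of φ
  have hpoint : ∀ x, (-(lap u x + lam ^ 2 * u x)) * (starRingEnd ℂ) (v x)
      = (-(lap u x + lam ^ 2 * u x)) * w x := by
    intro x
    by_cases hx : (fun x => -(lap u x + lam ^ 2 * u x)) x = 0
    · simp only at hx
      rw [hx, zero_mul, zero_mul]
    · have hxs : x ∈ V := hVsub (subset_tsupport _ hx)
      have hψ1 : ψ x = 1 := hVone x hxs
      simp [hw_def, hψ1]
  have hlapw : ∫ x, lap u x * w x
      = ∑ j : Fin n, ∫ x, pderiv' j (pderiv' j u) x * w x := by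
    rw [← integral_finset_sum _ (fun j _ => int1 j)]
    congr 1
    funext x
    simp [lap, Finset.sum_mul]
  have key : ∫ x, (-(lap u x + lam ^ 2 * u x)) * (starRingEnd ℂ) (v x)
      = (∑ j : Fin n, ∫ x, pderiv' j u x * pderiv' j w x) - lam ^ 2 * ∫ x, u x * w x := by
    have e1 : ∫ x, (-(lap u x + lam ^ 2 * u x)) * (starRingEnd ℂ) (v x)
        = ∫ x, (-(lap u x * w x) - lam ^ 2 * (u x * w x)) := by
      congr 1
      funext x
      rw [hpoint x]
      ring
    have hA : Integrable (fun x => -(lap u x * w x)) := by exact int5.neg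
    rw [e1, integral_sub hA (int4.const_mul _), integral_neg, integral_const_mul, hlapw,
      show ∑ j : Fin n, ∫ x, pderiv' j (pderiv' j u) x * w x
        = ∑ j : Fin n, -(∫ x, pderiv' j u x * pderiv' j w x) from
          Finset.sum_congr rfl (fun j _ => ibp j)]
    rw [Finset.sum_neg_distrib, neg_neg]
  -- sup bounds for ψ
  have hCψ0 : ∀ x, |ψ x| ≤ Cψ := by
    intro x
    have hcs : HasCompactSupport (fun x => |ψ x|) := by
      apply HasCompactSupport.intro hψc
      intro y hy
      simp [image_eq_zero_of_notMem_tsupport hy]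
    have hbdd : BddAbove (Set.range fun x => |ψ x|) :=
      hψ.continuous.abs.bddAbove_range_of_hasCompactSupport hcs
    calc |ψ x| ≤ ⨆ x, |ψ x| := le_ciSup hbdd x
      _ ≤ Cψ := by rw [hCψeq]; exact le_max_left _ _
  have hGψ : ∀ x, Real.sqrt (gradNormSq ψ x) ≤ Cψ := by
    intro x
    have hcont : Continuous (fun x => Real.sqrt (gradNormSq ψ x)) :=
      Real.continuous_sqrt.comp (gradNormSq_continuous hψ)
    have hsupp : HasCompactSupport (fun x => Real.sqrt (gradNormSq ψ x)) := by
      apply HasCompactSupport.intro hψc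
      intro y hy
      have hz : ∀ j : Fin n, pderiv' j ψ y = 0 := by
        intro j
        have hy' : y ∉ tsupport (fderiv ℝ ψ) := fun hmem => hy (tsupport_fderiv_subset ℝ hmem)
        simp [pderiv', image_eq_zero_of_notMem_tsupport hy']
      simp [gradNormSq, hz]
    have hbdd := hcont.bddAbove_range_of_hasCompactSupport hsupp
    calc Real.sqrt (gradNormSq ψ x) ≤ ⨆ x, Real.sqrt (gradNormSq ψ x) := le_ciSup hbdd x
      _ ≤ Cψ := by rw [hCψeq]; exact le_trans (le_max_left _ _) (le_max_right _ _)
  have hCψnn : 0 ≤ Cψ := le_trans (abs_nonneg _) (hCψ0 0)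
  -- derivative of w
  have hvdconj : Differentiable ℝ (fun y => (starRingEnd ℂ) (v y)) := hvconj.differentiable hone
  have hψℂd : Differentiable ℝ (fun y => ((ψ y : ℝ) : ℂ)) := hψℂ.differentiable hone
  have hwder : ∀ (j : Fin n) (x : EuclideanSpace ℝ (Fin n)), pderiv' j w x
      = ((pderiv' j ψ x : ℝ) : ℂ) * (starRingEnd ℂ) (v x)
        + ((ψ x : ℝ) : ℂ) * (starRingEnd ℂ) (pderiv' j (⇑v) x) := by
    intro j x
    rw [hw_def, pderiv'_mul hψℂd hvdconj j x, pderiv'_ofReal hψd j x, pderiv'_conj hvd j x]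
  have hwnorm : ∀ (j : Fin n) (x : EuclideanSpace ℝ (Fin n)), ‖pderiv' j w x‖
      ≤ ‖pderiv' j ψ x‖ * ‖v x‖ + |ψ x| * ‖pderiv' j (⇑v) x‖ := by
    intro j x
    rw [hwder j x]
    refine le_trans (norm_add_le _ _) ?_
    simp [norm_mul, Complex.norm_real, RCLike.norm_conj, Real.norm_eq_abs, abs_mul, le_refl]
  -- quantities
  set Bl : Set (EuclideanSpace ℝ (Fin n)) := Metric.ball 0 R with hBl_def
  set A := ∫ x in Bl, gradNormSq u x with hA_def
  set B2 := ∫ x in Bl, ‖u x‖ ^ 2 with hB_def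
  set Cv := ∫ x, gradNormSq (⇑v) x with hCv_def
  set Dv := ∫ x, ‖v x‖ ^ 2 with hDv_def
  set Gu : EuclideanSpace ℝ (Fin n) → ℝ := fun x => Real.sqrt (gradNormSq u x) with hGu_def
  set Gv : EuclideanSpace ℝ (Fin n) → ℝ := fun x => Real.sqrt (gradNormSq (⇑v) x) with hGv_def
  have hGu0 : ∀ x, 0 ≤ Gu x := fun x => Real.sqrt_nonneg _
  have hGv0 : ∀ x, 0 ≤ Gv x := fun x => Real.sqrt_nonneg _
  have cGu : Continuous Gu := Real.continuous_sqrt.comp (gradNormSq_continuous hu)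
  have cGv : Continuous Gv := Real.continuous_sqrt.comp (gradNormSq_continuous hv)
  have hGu2 : ∀ x, Gu x ^ 2 = gradNormSq u x := fun x => Real.sq_sqrt (gradNormSq_nonneg u x)
  have hGv2 : ∀ x, Gv x ^ 2 = gradNormSq (⇑v) x := fun x => Real.sq_sqrt (gradNormSq_nonneg _ x)
  have cvj : ∀ j : Fin n, Continuous (pderiv' j (⇑v)) := fun j => (pderiv'_contDiff hv j).continuous
  -- integrability of Schwartz quantities on ℝⁿ
  have intDv : Integrable (fun x => ‖v x‖ ^ 2) := schwartz_sq_integrable v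
  have intCv : Integrable (fun x => gradNormSq (⇑v) x) := by
    have : Integrable (fun x => ∑ j : Fin n, ‖pderiv' j (⇑v) x‖ ^ 2) := by
      refine integrable_finset_sum _ (fun j _ => ?_)
      have hf2 := schwartz_sq_integrable (SchwartzMap.fderivCLM ℝ _ _ v)
      refine hf2.mono' (((cvj j).norm.pow 2).aestronglyMeasurable) ?_
      filter_upwards with x
      rw [Real.norm_of_nonneg (by positivity)]
      have h1 : ‖pderiv' j (⇑v) x‖ ≤ ‖(SchwartzMap.fderivCLM ℝ _ _ v) x‖ := by
        rw [SchwartzMap.fderivCLM_apply]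
        calc ‖fderiv ℝ (⇑v) x (EuclideanSpace.single j 1)‖
            ≤ ‖fderiv ℝ (⇑v) x‖ * ‖EuclideanSpace.single j (1:ℝ)‖ :=
              ContinuousLinearMap.le_opNorm _ _
          _ = ‖fderiv ℝ (⇑v) x‖ := by rw [EuclideanSpace.norm_single]; simp
      exact pow_le_pow_left₀ (norm_nonneg _) h1 2
    simpa [gradNormSq] using this
  -- nonnegativity
  have hA0 : 0 ≤ A := setIntegral_nonneg measurableSet_ball (fun x _ => gradNormSq_nonneg u x)
  have hB0 : 0 ≤ B2 := setIntegral_nonneg measurableSet_ball (fun x _ => by positivity)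
  have hCv0 : 0 ≤ Cv := integral_nonneg (fun x => gradNormSq_nonneg _ x)
  have hDv0 : 0 ≤ Dv := integral_nonneg (fun x => by positivity)
  -- integrability on the ball
  have intball : ∀ {f : EuclideanSpace ℝ (Fin n) → ℝ}, Continuous f → IntegrableOn f Bl := by
    intro f hf
    exact (hf.locallyIntegrable.integrableOn_isCompact (isCompact_closedBall _ _)).mono_set
      Metric.ball_subset_closedBall
  -- Cauchy-Schwarz bounds on the ball
  have hvball : ∫ x in Bl, ‖v x‖ ^ 2 ≤ Dv :=
    setIntegral_le_integral intDv (Filter.Eventually.of_forall (fun x => by positivity))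
  have hGvball : ∫ x in Bl, Gv x ^ 2 ≤ Cv := by
    have h1 : ∫ x in Bl, Gv x ^ 2 = ∫ x in Bl, gradNormSq (⇑v) x := by
      congr 1; funext x; exact hGv2 x
    rw [h1]
    exact setIntegral_le_integral intCv
      (Filter.Eventually.of_forall (fun x => gradNormSq_nonneg _ x))
  have hGuball : ∫ x in Bl, Gu x ^ 2 = A := by
    rw [hA_def]; congr 1; funext x; exact hGu2 x
  have cs1 : ∫ x in Bl, Gu x * ‖v x‖ ≤ Real.sqrt A * Real.sqrt Dv := by
    refine le_trans (l2CS (cGu.aestronglyMeasurable.restrict)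
      (v.continuous.norm.aestronglyMeasurable.restrict) hGu0 (fun x => norm_nonneg _)
      (intball (cGu.pow 2)) (intball (v.continuous.norm.pow 2))) ?_
    rw [hGuball]
    exact mul_le_mul_of_nonneg_left (Real.sqrt_le_sqrt hvball) (Real.sqrt_nonneg _)
  have cs2 : ∫ x in Bl, Gu x * Gv x ≤ Real.sqrt A * Real.sqrt Cv := by
    refine le_trans (l2CS (cGu.aestronglyMeasurable.restrict) (cGv.aestronglyMeasurable.restrict)
      hGu0 hGv0 (intball (cGu.pow 2)) (intball (cGv.pow 2))) ?_
    rw [hGuball]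
    exact mul_le_mul_of_nonneg_left (Real.sqrt_le_sqrt hGvball) (Real.sqrt_nonneg _)
  have cs3 : ∫ x in Bl, ‖u x‖ * ‖v x‖ ≤ Real.sqrt B2 * Real.sqrt Dv := by
    refine le_trans (l2CS (hu.continuous.norm.aestronglyMeasurable.restrict)
      (v.continuous.norm.aestronglyMeasurable.restrict) (fun x => norm_nonneg _)
      (fun x => norm_nonneg _) (intball (hu.continuous.norm.pow 2))
      (intball (v.continuous.norm.pow 2))) ?_
    exact mul_le_mul_of_nonneg_left (Real.sqrt_le_sqrt hvball) (Real.sqrt_nonneg _)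
  -- first bound : the gradient term
  set F : EuclideanSpace ℝ (Fin n) → ℝ :=
    fun x => ∑ j : Fin n, ‖pderiv' j u x‖ * ‖pderiv' j w x‖ with hF_def
  have cF : Continuous F := continuous_finset_sum _ fun j _ => ((cu j).norm.mul (cwj j).norm)
  have intF : ∀ j : Fin n, Integrable (fun x => ‖pderiv' j u x‖ * ‖pderiv' j w x‖) := by
    intro j
    refine ((cu j).norm.mul (cwj j).norm).integrable_of_hasCompactSupport ?_
    apply HasCompactSupport.intro hψc
    intro y hy
    simp [hwder0 j y hy]
  have hFb : ∀ x, F x ≤ Cψ * (Gu x * ‖v x‖) + Cψ * (Gu x * Gv x) := by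
    intro x
    have h1 : F x ≤ ∑ j : Fin n, (‖pderiv' j u x‖ * ‖pderiv' j ψ x‖ * ‖v x‖
        + |ψ x| * (‖pderiv' j u x‖ * ‖pderiv' j (⇑v) x‖)) := by
      refine Finset.sum_le_sum fun j _ => ?_
      calc ‖pderiv' j u x‖ * ‖pderiv' j w x‖
          ≤ ‖pderiv' j u x‖ * (‖pderiv' j ψ x‖ * ‖v x‖ + |ψ x| * ‖pderiv' j (⇑v) x‖) :=
            mul_le_mul_of_nonneg_left (hwnorm j x) (norm_nonneg _)
        _ = ‖pderiv' j u x‖ * ‖pderiv' j ψ x‖ * ‖v x‖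
            + |ψ x| * (‖pderiv' j u x‖ * ‖pderiv' j (⇑v) x‖) := by ring
    have h2 : ∑ j : Fin n, ‖pderiv' j u x‖ * ‖pderiv' j ψ x‖
        ≤ Gu x * Real.sqrt (gradNormSq ψ x) := by
      simpa [gradNormSq, hGu_def] using Real.sum_mul_le_sqrt_mul_sqrt Finset.univ
        (fun j => ‖pderiv' j u x‖) (fun j => ‖pderiv' j ψ x‖)
    have h3 : ∑ j : Fin n, ‖pderiv' j u x‖ * ‖pderiv' j (⇑v) x‖ ≤ Gu x * Gv x := by
      simpa [gradNormSq, hGu_def, hGv_def] using Real.sum_mul_le_sqrt_mul_sqrt Finset.univ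
        (fun j => ‖pderiv' j u x‖) (fun j => ‖pderiv' j (⇑v) x‖)
    calc F x ≤ _ := h1
      _ = (∑ j : Fin n, ‖pderiv' j u x‖ * ‖pderiv' j ψ x‖) * ‖v x‖
          + |ψ x| * (∑ j : Fin n, ‖pderiv' j u x‖ * ‖pderiv' j (⇑v) x‖) := by
          rw [Finset.sum_add_distrib, ← Finset.sum_mul, ← Finset.mul_sum]
      _ ≤ (Gu x * Real.sqrt (gradNormSq ψ x)) * ‖v x‖ + Cψ * (Gu x * Gv x) := by
          refine add_le_add (mul_le_mul_of_nonneg_right h2 (norm_nonneg _)) ?_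
          refine mul_le_mul (hCψ0 x) h3 ?_ hCψnn
          exact Finset.sum_nonneg fun j _ => by positivity
      _ ≤ Cψ * (Gu x * ‖v x‖) + Cψ * (Gu x * Gv x) := by
          refine add_le_add ?_ le_rfl
          have he : (Gu x * Real.sqrt (gradNormSq ψ x)) * ‖v x‖
              = Real.sqrt (gradNormSq ψ x) * (Gu x * ‖v x‖) := by ring
          rw [he]
          exact mul_le_mul_of_nonneg_right (hGψ x) (mul_nonneg (hGu0 x) (norm_nonneg _))
  have hFout : ∀ x ∉ Bl, F x = 0 := by
    intro x hx
    have hx' : x ∉ tsupport ψ := fun hmem => hx (hψR hmem)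
    simp [hF_def, hwder0 _ x hx']
  have bound1 : ‖∑ j : Fin n, ∫ x, pderiv' j u x * pderiv' j w x‖
      ≤ Cψ * (Real.sqrt A * Real.sqrt Dv) + Cψ * (Real.sqrt A * Real.sqrt Cv) := by
    calc ‖∑ j : Fin n, ∫ x, pderiv' j u x * pderiv' j w x‖
        ≤ ∑ j : Fin n, ‖∫ x, pderiv' j u x * pderiv' j w x‖ := norm_sum_le _ _
      _ ≤ ∑ j : Fin n, ∫ x, ‖pderiv' j u x * pderiv' j w x‖ :=
          Finset.sum_le_sum fun j _ => norm_integral_le_integral_norm _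
      _ = ∑ j : Fin n, ∫ x, ‖pderiv' j u x‖ * ‖pderiv' j w x‖ := by simp_rw [norm_mul]
      _ = ∫ x, F x := (integral_finset_sum _ (fun j _ => intF j)).symm
      _ = ∫ x in Bl, F x := (setIntegral_eq_integral_of_forall_compl_eq_zero hFout).symm
      _ ≤ ∫ x in Bl, (Cψ * (Gu x * ‖v x‖) + Cψ * (Gu x * Gv x)) := by
          refine setIntegral_mono_on ((intball cF)) (intball ?_) measurableSet_ball
            (fun x _ => hFb x)
          exact (continuous_const.mul (cGu.mul v.continuous.norm)).add
            (continuous_const.mul (cGu.mul cGv))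
      _ = Cψ * (∫ x in Bl, Gu x * ‖v x‖) + Cψ * (∫ x in Bl, Gu x * Gv x) := by
          rw [integral_add (f := fun x => Cψ * (Gu x * ‖v x‖)) (g := fun x => Cψ * (Gu x * Gv x))
            ((intball (cGu.mul v.continuous.norm)).const_mul Cψ)
            ((intball (cGu.mul cGv)).const_mul Cψ), integral_const_mul, integral_const_mul]
      _ ≤ Cψ * (Real.sqrt A * Real.sqrt Dv) + Cψ * (Real.sqrt A * Real.sqrt Cv) :=
          add_le_add (mul_le_mul_of_nonneg_left cs1 hCψnn)
            (mul_le_mul_of_nonneg_left cs2 hCψnn)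
  -- second bound : the λ² term
  have hwnorm2 : ∀ x, ‖w x‖ ≤ Cψ * ‖v x‖ := by
    intro x
    have he : ‖w x‖ = |ψ x| * ‖v x‖ := by
      rw [hw_def]
      simp [norm_mul, Complex.norm_real, RCLike.norm_conj, Real.norm_eq_abs]
    rw [he]
    exact mul_le_mul_of_nonneg_right (hCψ0 x) (norm_nonneg _)
  have bound2 : ‖lam ^ 2 * ∫ x, u x * w x‖
      ≤ 2 * k ^ 2 * (Cψ * (Real.sqrt B2 * Real.sqrt Dv)) := by
    have hI : ‖∫ x, u x * w x‖ ≤ Cψ * (Real.sqrt B2 * Real.sqrt Dv) := by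
      calc ‖∫ x, u x * w x‖ ≤ ∫ x, ‖u x * w x‖ := norm_integral_le_integral_norm _
        _ = ∫ x, ‖u x‖ * ‖w x‖ := by simp_rw [norm_mul]
        _ = ∫ x in Bl, ‖u x‖ * ‖w x‖ := by
            refine (setIntegral_eq_integral_of_forall_compl_eq_zero ?_).symm
            intro x hx
            have hx' : x ∉ tsupport ψ := fun hmem => hx (hψR hmem)
            simp [hw0 x hx']
        _ ≤ ∫ x in Bl, Cψ * (‖u x‖ * ‖v x‖) := by
            refine setIntegral_mono_on (intball (hu.continuous.norm.mul cw.norm))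
              (intball (continuous_const.mul (hu.continuous.norm.mul v.continuous.norm)))
              measurableSet_ball (fun x _ => ?_)
            exact (mul_le_mul_of_nonneg_left (hwnorm2 x) (norm_nonneg (u x))).trans
              (le_of_eq (by ring))
        _ = Cψ * ∫ x in Bl, ‖u x‖ * ‖v x‖ := integral_const_mul _ _
        _ ≤ Cψ * (Real.sqrt B2 * Real.sqrt Dv) := mul_le_mul_of_nonneg_left cs3 hCψnn
    calc ‖lam ^ 2 * ∫ x, u x * w x‖
        = ‖lam‖ ^ 2 * ‖∫ x, u x * w x‖ := by
          rw [norm_mul, norm_pow]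
      _ ≤ 2 * k ^ 2 * (Cψ * (Real.sqrt B2 * Real.sqrt Dv)) :=
          mul_le_mul hlam hI (norm_nonneg _) (by positivity)
  -- final numeric assembly
  have hP0 : 0 ≤ Real.sqrt (A + k ^ 2 * B2) := Real.sqrt_nonneg _
  have hQ0 : 0 ≤ Real.sqrt (Cv + k ^ 2 * Dv) := Real.sqrt_nonneg _
  have s1 : Real.sqrt A ≤ Real.sqrt (A + k ^ 2 * B2) :=
    Real.sqrt_le_sqrt (by nlinarith [sq_nonneg k])
  have s2 : Real.sqrt Cv ≤ Real.sqrt (Cv + k ^ 2 * Dv) :=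
    Real.sqrt_le_sqrt (by nlinarith [sq_nonneg k])
  have s3 : Real.sqrt Dv ≤ Real.sqrt (Cv + k ^ 2 * Dv) / k₀ := by
    rw [le_div_iff₀ hk₀]
    have he : Real.sqrt Dv * k₀ = Real.sqrt (k₀ ^ 2 * Dv) := by
      rw [Real.sqrt_mul (sq_nonneg _), Real.sqrt_sq hk₀.le]
      ring
    rw [he]
    have hk2 : k₀ ^ 2 ≤ k ^ 2 := by nlinarith
    exact Real.sqrt_le_sqrt (by nlinarith [mul_le_mul_of_nonneg_right hk2 hDv0])
  have s4 : k * Real.sqrt B2 ≤ Real.sqrt (A + k ^ 2 * B2) := by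
    have he : k * Real.sqrt B2 = Real.sqrt (k ^ 2 * B2) := by
      rw [Real.sqrt_mul (sq_nonneg _), Real.sqrt_sq hkpos.le]
    rw [he]
    exact Real.sqrt_le_sqrt (by nlinarith)
  have s5 : k * Real.sqrt Dv ≤ Real.sqrt (Cv + k ^ 2 * Dv) := by
    have he : k * Real.sqrt Dv = Real.sqrt (k ^ 2 * Dv) := by
      rw [Real.sqrt_mul (sq_nonneg _), Real.sqrt_sq hkpos.le]
    rw [he]
    exact Real.sqrt_le_sqrt (by nlinarith)
  calc ‖∫ x, (-(lap u x + lam ^ 2 * u x)) * (starRingEnd ℂ) (v x)‖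
      = ‖(∑ j : Fin n, ∫ x, pderiv' j u x * pderiv' j w x) - lam ^ 2 * ∫ x, u x * w x‖ := by
        rw [key]
    _ ≤ ‖∑ j : Fin n, ∫ x, pderiv' j u x * pderiv' j w x‖ + ‖lam ^ 2 * ∫ x, u x * w x‖ :=
        norm_sub_le _ _
    _ ≤ (Cψ * (Real.sqrt A * Real.sqrt Dv) + Cψ * (Real.sqrt A * Real.sqrt Cv))
        + 2 * k ^ 2 * (Cψ * (Real.sqrt B2 * Real.sqrt Dv)) := add_le_add bound1 bound2
    _ ≤ (|Cψ| + 1) * (3 + 1/k₀) * (A + k ^ 2 * B2) ^ (1/2 : ℝ)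
        * ((Cv + k ^ 2 * Dv) ^ (1/2 : ℝ)) := by
        rw [← Real.sqrt_eq_rpow, ← Real.sqrt_eq_rpow]
        set P := Real.sqrt (A + k ^ 2 * B2) with hP_def
        set Q := Real.sqrt (Cv + k ^ 2 * Dv) with hQ_def
        have hPQ : 0 ≤ P * Q := mul_nonneg hP0 hQ0
        have t1 : Cψ * (Real.sqrt A * Real.sqrt Dv) ≤ Cψ * (P * (Q / k₀)) := by
          refine mul_le_mul_of_nonneg_left ?_ hCψnn
          exact mul_le_mul s1 s3 (Real.sqrt_nonneg _) hP0
        have t2 : Cψ * (Real.sqrt A * Real.sqrt Cv) ≤ Cψ * (P * Q) := by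
          refine mul_le_mul_of_nonneg_left ?_ hCψnn
          exact mul_le_mul s1 s2 (Real.sqrt_nonneg _) hP0
        have t3 : 2 * k ^ 2 * (Cψ * (Real.sqrt B2 * Real.sqrt Dv)) ≤ 2 * Cψ * (P * Q) := by
          have he : 2 * k ^ 2 * (Cψ * (Real.sqrt B2 * Real.sqrt Dv))
              = 2 * Cψ * ((k * Real.sqrt B2) * (k * Real.sqrt Dv)) := by ring
          rw [he]
          refine mul_le_mul_of_nonneg_left ?_ (by positivity)
          exact mul_le_mul s4 s5 (by positivity) hP0
        have hM : Cψ * (P * Q) ≤ (|Cψ| + 1) * (P * Q) :=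
          mul_le_mul_of_nonneg_right (by linarith [le_abs_self Cψ]) hPQ
        have hM' : Cψ * (P * Q) * (1/k₀) ≤ (|Cψ| + 1) * (P * Q) * (1/k₀) :=
          mul_le_mul_of_nonneg_right hM (by positivity)
        calc Cψ * (Real.sqrt A * Real.sqrt Dv) + Cψ * (Real.sqrt A * Real.sqrt Cv)
              + 2 * k ^ 2 * (Cψ * (Real.sqrt B2 * Real.sqrt Dv))
            ≤ Cψ * (P * (Q / k₀)) + Cψ * (P * Q) + 2 * Cψ * (P * Q) := by
              linarith [t1, t2, t3]
          _ = Cψ * (P * Q) * (1/k₀) + 3 * (Cψ * (P * Q)) := by ring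
          _ ≤ (|Cψ| + 1) * (P * Q) * (1/k₀) + 3 * ((|Cψ| + 1) * (P * Q)) := by
              linarith [hM, hM']
          _ = (|Cψ| + 1) * (3 + 1/k₀) * P * Q := by ring
end
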